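/- arXiv:2101.03081 — 3 statements merged into one kernel-verified Lean document; each statement's English description precedes it below -/
import Mathlib

section
/- Let B be a polymatroidal basis of degree d in n variables and let α, β ∈ B with α(i) > β(i) for some index i. Then there exists an index j with α(j) < β(j) such that both γ and δ lie in B, where γ + e_i = α + e_j (i.e. γ = α − e_i + e_j) and δ + e_j = β + e_i (i.e. δ = β − e_j + e_i). -/
/-- The `i`-th standard unit exponent vector. -/
def eVec {n : ℕ} (i : Fin n) : Fin n → ℕ := fun j => if j = i then 1 else 0

/-- A finite nonempty set `B` of exponent vectors is a polymatroidal basis of degree `d` if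
every `α ∈ B` has degree `d` and whenever `α, β ∈ B` with `α i > β i` for some `i`, there is
`j` with `α j < β j` and an element `γ ∈ B` with `γ + e i = α + e j`. -/
def IsPolymatroidal {n : ℕ} (B : Finset (Fin n → ℕ)) (d : ℕ) : Prop :=
  B.Nonempty ∧ (∀ α ∈ B, ∑ i, α i = d) ∧
    ∀ α ∈ B, ∀ β ∈ B, ∀ i : Fin n, β i < α i →
      ∃ j : Fin n, α j < β j ∧ ∃ γ ∈ B, γ + eVec i = α + eVec j

/-!
Write `γ = α - eᵢ + eⱼ` for `γ + eᵢ = α + eⱼ`. First the co-exchange property: if `β i < α i`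
then `β - eⱼ + eᵢ ∈ B` for some `j` with `α j < β j`. By induction on the `ℓ¹`-distance of `α`
and `β`: if `α` exceeds `β` at some `k ≠ i`, an exchange at `k` moves `α` closer to `β` without
changing its `i`-th coordinate; otherwise `i` is the only coordinate where `α` exceeds `β`, and
the exchange axiom applied to `β` and `α` at any `j` with `α j < β j` is forced to return
`β - eⱼ + eᵢ`.

For the symmetric exchange take `j` from co-exchange for `(α, β, i)`, and then `l` with
`β l < α l` and `α' = α - eₗ + eⱼ ∈ B` from co-exchange for `(β, α, j)`. If `l = i` we are done.
Otherwise `α'` is closer to `β` and agrees with `α` at `i`, so by induction there is `p` with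
`α' - eᵢ + eₚ ∈ B` and `β - eₚ + eᵢ ∈ B`. The exchange axiom for `α` and `α' - eᵢ + eₚ` at `i`
gives `α - eᵢ + e_q ∈ B` with `q ∈ {j, p}`, and either choice of `q` pairs with a known
`β - e_q + eᵢ ∈ B`.
-/

variable {n : ℕ}

lemma apply_of_add_eVec_eq {γ α : Fin n → ℕ} {i j : Fin n} (h : γ + eVec i = α + eVec j)
    (k : Fin n) : γ k + (if k = i then 1 else 0) = α k + (if k = j then 1 else 0) :=
  congrFun h k

def l1Dist (α β : Fin n → ℕ) : ℕ := ∑ k, (α k).dist (β k)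

lemma l1Dist_lt_of_add_eVec_eq {α β γ : Fin n → ℕ} {i j : Fin n} (hi : β i < α i)
    (hj : α j < β j) (h : γ + eVec i = α + eVec j) : l1Dist γ β < l1Dist α β := by
  refine Finset.sum_lt_sum (fun k _ => ?_) ⟨i, Finset.mem_univ i, ?_⟩
  · have := apply_of_add_eVec_eq h k
    simp only [Nat.dist]
    split_ifs at this <;> subst_vars <;> omega
  · have := apply_of_add_eVec_eq h i
    simp only [Nat.dist]
    split_ifs at this <;> subst_vars <;> omega

lemma exists_lt_of_sum_eq {α β : Fin n → ℕ} (hsum : ∑ k, α k = ∑ k, β k) {i : Fin n}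
    (hi : β i < α i) : ∃ j, α j < β j := by
  by_contra! h
  exact (Finset.sum_lt_sum (fun k _ => h k) ⟨i, Finset.mem_univ i, hi⟩).ne' hsum

namespace IsPolymatroidal

variable {B : Finset (Fin n → ℕ)} {d : ℕ}

theorem exists_coexchange (hB : IsPolymatroidal B d) {α β : Fin n → ℕ} (hα : α ∈ B)
    (hβ : β ∈ B) {i : Fin n} (hi : β i < α i) :
    ∃ j, α j < β j ∧ ∃ δ ∈ B, δ + eVec j = β + eVec i := by
  by_cases hk : ∃ k ≠ i, β k < α k
  · obtain ⟨k, hki, hk⟩ := hk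
    obtain ⟨j, hj, γ, hγB, hγ⟩ := hB.2.2 α hα β hβ k hk
    have hγi : β i < γ i := by
      have := apply_of_add_eVec_eq hγ i
      split_ifs at this <;> omega
    obtain ⟨j', hj', hδ⟩ := exists_coexchange hB hγB hβ hγi
    refine ⟨j', ?_, hδ⟩
    have := apply_of_add_eVec_eq hγ j'
    split_ifs at this <;> subst_vars <;> omega
  · push Not at hk
    obtain ⟨j, hj⟩ := exists_lt_of_sum_eq ((hB.2.1 α hα).trans (hB.2.1 β hβ).symm) hi
    obtain ⟨l, hl, δ, hδB, hδ⟩ := hB.2.2 β hβ α hα j hj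
    obtain rfl : l = i := by
      by_contra hli
      exact (hk l hli).not_gt hl
    exact ⟨j, hj, δ, hδB, hδ⟩
termination_by l1Dist α β
decreasing_by exact l1Dist_lt_of_add_eVec_eq hk hj hγ

end IsPolymatroidal

/-- **Symmetric exchange property.** -/
theorem symmetric_exchange {n d : ℕ} (B : Finset (Fin n → ℕ))
    (hB : IsPolymatroidal B d) {α β : Fin n → ℕ} (hα : α ∈ B) (hβ : β ∈ B)
    {i : Fin n} (hi : β i < α i) :
    ∃ j : Fin n, α j < β j ∧ (∃ γ ∈ B, γ + eVec i = α + eVec j) ∧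
      (∃ δ ∈ B, δ + eVec j = β + eVec i) := by
  obtain ⟨j, hj, δ, hδB, hδ⟩ := hB.exists_coexchange hα hβ hi
  obtain ⟨l, hl, α', hα'B, hα'⟩ := hB.exists_coexchange hβ hα hj
  by_cases hli : l = i
  · subst hli
    exact ⟨j, hj, ⟨α', hα'B, hα'⟩, δ, hδB, hδ⟩
  have hα'i : α' i = α i := by
    have := apply_of_add_eVec_eq hα' i
    split_ifs at this <;> subst_vars <;> omega
  obtain ⟨p, hp, ⟨V, hVB, hV⟩, δ', hδ'B, hδ'⟩ :=
    symmetric_exchange B hB hα'B hβ (hα'i ▸ hi)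
  have hVi : V i < α i := by
    have := apply_of_add_eVec_eq hV i
    split_ifs at this <;> subst_vars <;> omega
  obtain ⟨q, hq, γ, hγB, hγ⟩ := hB.2.2 α hα V hVB i hVi
  have hq_cases : q = j ∨ (q = p ∧ α p < β p) := by
    have hVq := apply_of_add_eVec_eq hV q
    have hα'q := apply_of_add_eVec_eq hα' q
    have hα'p := apply_of_add_eVec_eq hα' p
    split_ifs at hVq hα'q hα'p <;> omega
  rcases hq_cases with rfl | ⟨rfl, hqβ⟩
  · exact ⟨q, hj, ⟨γ, hγB, hγ⟩, δ, hδB, hδ⟩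
  · exact ⟨q, hqβ, ⟨γ, hγB, hγ⟩, δ', hδ'B, hδ'⟩
termination_by l1Dist α β
decreasing_by exact l1Dist_lt_of_add_eVec_eq hl hj hα'
end

section
/- Let B be a finite nonempty basis with the strong exchange property (SEP) of degree d in n variables. Then B consists exactly of all exponent vectors α with deg(α) = d and min_B(i) ≤ α(i) ≤ max_B(i) for every index i. -/
/-- A finite nonempty set `B` of exponent vectors is a basis with the strong exchange
property (SEP) of degree `d` if every `α ∈ B` has degree `d` and whenever `α, β ∈ B`
with `α i > β i` and `α j < β j`, there is `γ ∈ B` with `γ + e i = α + e j`. -/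
def IsSEP {n : ℕ} (B : Finset (Fin n → ℕ)) (d : ℕ) : Prop :=
  B.Nonempty ∧ (∀ α ∈ B, ∑ i, α i = d) ∧
    ∀ α ∈ B, ∀ β ∈ B, ∀ i j : Fin n, β i < α i → α j < β j →
      ∃ γ ∈ B, γ + eVec i = α + eVec j

/-!
The move `β ↦ β - e_i + e_j` stays inside `B` whenever `β(i) > min_B(i)` and `β(j) < max_B(j)`:
among the `δ ∈ B` with `δ(i) < β(i)` take one with the largest `j`-coordinate; exchanging it
against a maximiser of the `j`-coordinate would raise `δ(j)` further, so already `δ(j) > β(j)`,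
and exchanging `β` against `δ` gives the move. Then for `α` of degree `d` within the bounds,
the `β ∈ B` nearest to `α` in the `ℓ¹` distance must be `α` itself, since otherwise such a
move brings `β` closer to `α`.
-/

theorem Fintype.exists_lt_of_sum_eq_of_ne {ι M : Type*} [Fintype ι] [AddCommMonoid M]
    [LinearOrder M] [IsOrderedCancelAddMonoid M] {f g : ι → M}
    (h : ∑ i, f i = ∑ i, g i) (hne : f ≠ g) : ∃ i, f i < g i := by
  by_contra! hle
  have heq := (Finset.sum_eq_sum_iff_of_le fun i _ => hle i).1 h.symm
  exact hne (funext fun i => (heq i (Finset.mem_univ i)).symm)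

section eVec

variable {n : ℕ} {γ β : Fin n → ℕ} {i j : Fin n}

lemma apply_le_of_add_eVec_eq (h : γ + eVec i = β + eVec j) {k : Fin n} (hk : k ≠ j) :
    γ k ≤ β k := by
  have := congrFun h k
  simp only [Pi.add_apply, eVec, hk, if_false] at this
  omega

lemma apply_add_one_of_add_eVec_eq (h : γ + eVec i = β + eVec j) (hij : i ≠ j) :
    γ i + 1 = β i := by
  simpa [eVec, hij] using congrFun h i

lemma apply_eq_add_one_of_add_eVec_eq (h : γ + eVec i = β + eVec j) (hij : i ≠ j) :
    γ j = β j + 1 := by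
  simpa [eVec, hij.symm] using congrFun h j

lemma apply_eq_of_add_eVec_eq (h : γ + eVec i = β + eVec j) {k : Fin n} (hki : k ≠ i)
    (hkj : k ≠ j) : γ k = β k := by
  simpa [eVec, hki, hkj] using congrFun h k

end eVec

namespace IsSEP

variable {n d : ℕ} {B : Finset (Fin n → ℕ)}

lemma exists_lt_of_ne (hB : IsSEP B d) {α β : Fin n → ℕ} (hα : α ∈ B) (hβ : β ∈ B)
    (hne : α ≠ β) : ∃ k, α k < β k :=
  Fintype.exists_lt_of_sum_eq_of_ne (by rw [hB.2.1 α hα, hB.2.1 β hβ]) hne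

lemma exists_raise (hB : IsSEP B d) {δ ε : Fin n → ℕ} (hδ : δ ∈ B) (hε : ε ∈ B) {j : Fin n}
    (hj : δ j < ε j) : ∃ γ ∈ B, γ j = δ j + 1 ∧ ∀ m ≠ j, γ m ≤ δ m := by
  obtain ⟨k, hk⟩ := hB.exists_lt_of_ne hε hδ fun h => hj.ne (h ▸ rfl)
  have hkj : k ≠ j := by rintro rfl; omega
  obtain ⟨γ, hγ, hγδ⟩ := hB.2.2 δ hδ ε hε k j hk hj
  exact ⟨γ, hγ, apply_eq_add_one_of_add_eVec_eq hγδ hkj,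
    fun m hm => apply_le_of_add_eVec_eq hγδ hm⟩

lemma exists_lt_and_lt (hB : IsSEP B d) {β δ₀ ε : Fin n → ℕ} {i j : Fin n} (hij : i ≠ j)
    (hδ₀ : δ₀ ∈ B) (hδ₀i : δ₀ i < β i) (hε : ε ∈ B) (hεj : β j < ε j) :
    ∃ δ ∈ B, δ i < β i ∧ β j < δ j := by
  obtain ⟨δ, hδS, hδmax⟩ := (B.filter fun δ => δ i < β i).exists_max_image (· j)
    ⟨δ₀, Finset.mem_filter.2 ⟨hδ₀, hδ₀i⟩⟩
  rw [Finset.mem_filter] at hδS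
  refine ⟨δ, hδS.1, hδS.2, ?_⟩
  by_contra! hle
  obtain ⟨γ, hγ, hγj, hγle⟩ := hB.exists_raise hδS.1 hε (hle.trans_lt hεj)
  have hγS : γ ∈ B.filter fun δ => δ i < β i :=
    Finset.mem_filter.2 ⟨hγ, (hγle i hij).trans_lt hδS.2⟩
  have := hδmax γ hγS
  omega

theorem exists_exchange (hB : IsSEP B d) (hne : B.Nonempty) {β : Fin n → ℕ} (hβ : β ∈ B)
    {i j : Fin n} (hi : B.inf' hne (· i) < β i) (hj : β j < B.sup' hne (· j)) :
    ∃ γ ∈ B, γ + eVec i = β + eVec j := by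
  rcases eq_or_ne i j with rfl | hij
  · exact ⟨β, hβ, rfl⟩
  obtain ⟨δ₀, hδ₀, hδ₀i⟩ := B.exists_mem_eq_inf' hne (· i)
  obtain ⟨ε, hε, hεj⟩ := B.exists_mem_eq_sup' hne (· j)
  obtain ⟨δ, hδ, hδi, hδj⟩ :=
    hB.exists_lt_and_lt hij hδ₀ (hδ₀i ▸ hi) hε (hεj ▸ hj)
  exact hB.2.2 β hβ δ hδ i j hδi hδj

end IsSEP

lemma sum_dist_lt_of_add_eVec_eq {n : ℕ} {α β γ : Fin n → ℕ} {i j : Fin n}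
    (h : γ + eVec i = β + eVec j) (hi : α i < β i) (hj : β j < α j) :
    ∑ k, Nat.dist (α k) (γ k) < ∑ k, Nat.dist (α k) (β k) := by
  have hij : i ≠ j := by rintro rfl; omega
  have hγi := apply_add_one_of_add_eVec_eq h hij
  have hγj := apply_eq_add_one_of_add_eVec_eq h hij
  refine Finset.sum_lt_sum (fun k _ => ?_) ⟨i, Finset.mem_univ i, ?_⟩
  · rcases eq_or_ne k i with rfl | hki
    · unfold Nat.dist; omega
    rcases eq_or_ne k j with rfl | hkj
    · unfold Nat.dist; omega
    rw [apply_eq_of_add_eVec_eq h hki hkj]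
  · unfold Nat.dist; omega

/-- A basis with the SEP consists exactly of all exponent vectors of degree `d` whose
entries are pinched between the coordinatewise minima and maxima of `B`. -/
theorem sep_is_veronese_type {n d : ℕ} (B : Finset (Fin n → ℕ))
    (hB : IsSEP B d) (hne : B.Nonempty) :
    ∀ α : Fin n → ℕ, α ∈ B ↔
      ((∑ i, α i) = d ∧ ∀ i : Fin n,
        B.inf' hne (fun β => β i) ≤ α i ∧ α i ≤ B.sup' hne (fun β => β i)) := by
  intro α
  refine ⟨fun hα => ⟨hB.2.1 α hα, fun i => ⟨B.inf'_le _ hα, B.le_sup' (· i) hα⟩⟩, ?_⟩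
  rintro ⟨hα, hbound⟩
  obtain ⟨β, hβ, hβmin⟩ := B.exists_min_image (fun β => ∑ k, Nat.dist (α k) (β k)) hne
  by_contra hαB
  have hsum : ∑ k, α k = ∑ k, β k := by rw [hα, hB.2.1 β hβ]
  have hαβ : α ≠ β := by rintro rfl; exact hαB hβ
  obtain ⟨i, hi⟩ := Fintype.exists_lt_of_sum_eq_of_ne hsum hαβ
  obtain ⟨j, hj⟩ := Fintype.exists_lt_of_sum_eq_of_ne hsum.symm hαβ.symm
  obtain ⟨γ, hγ, hγβ⟩ :=
    hB.exists_exchange hne hβ ((hbound i).1.trans_lt hi) (hj.trans_le (hbound j).2)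
  exact (sum_dist_lt_of_add_eVec_eq hγβ hi hj).not_ge (hβmin γ hγ)
end

section
/- Let k ≥ 1 and let r : Fin n → ℕ be an exponent vector with r(i) < k for every i and with k dividing ∑_i r(i). Then there exist exponent vectors M_1, …, M_k : Fin n → ℕ, each with all entries in {0,1} (squarefree) and each of the same degree ∑_i M_t(i) = (∑_i r(i))/k, such that M_1 + ⋯ + M_k = r. -/
/-!
Lay the variables out as consecutive blocks of lengths `r 0, r 1, …` on the positions
`0, 1, …, ∑ i, r i - 1` and colour position `p` by `p % k`; let `M t i` be the number of
positions of colour `t` in the block of variable `i`. A block has fewer than `k` positions, so it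
meets each colour at most once, and since `k` divides the total length every colour occurs exactly
`(∑ i, r i) / k` times.
-/

open Finset

section ColorCount

variable {ι κ : Type*} {α : ι → Type*} [∀ i, Fintype (α i)] [DecidableEq κ] (c : (Σ i, α i) → κ)

def colorCount (t : κ) (i : ι) : ℕ := #{a : α i | c ⟨i, a⟩ = t}

theorem sum_colorCount_color [Fintype κ] (i : ι) : ∑ t, colorCount c t i = Fintype.card (α i) :=
  (card_eq_sum_card_fiberwise fun a _ => mem_univ (c ⟨i, a⟩)).symm

theorem sum_colorCount_index [Fintype ι] (t : κ) : ∑ i, colorCount c t i = #{x | c x = t} := by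
  simp only [colorCount]
  rw [← card_sigma]
  congr 1
  ext ⟨i, a⟩
  simp

theorem colorCount_le_one (hc : ∀ i, Function.Injective fun a : α i => c ⟨i, a⟩) (t : κ) (i : ι) :
    colorCount c t i ≤ 1 :=
  card_le_one.2 fun a ha b hb => hc i <| by simp_all

end ColorCount

theorem card_filter_range_mod_eq_of_dvd {S k t : ℕ} (hS : k ∣ S) (ht : t < k) :
    #{p ∈ range S | p % k = t} = S / k := by
  have hcount := Nat.count_modEq_card (b := S) (by omega : 0 < k) t
  rw [Nat.count_eq_card_filter_range, Nat.mod_eq_zero_of_dvd hS] at hcount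
  simpa [Nat.ModEq, Nat.mod_eq_of_lt ht] using hcount

theorem card_filter_comp_equiv_fin {α : Type*} [Fintype α] {S : ℕ} (e : α ≃ Fin S) (p : ℕ → Prop)
    [DecidablePred p] : #{x | p (e x)} = #{y ∈ range S | p y} := by
  refine card_nbij (fun x => (e x : ℕ)) (fun x hx => by simp_all) ?_ ?_
  · exact fun x _ y _ h => e.injective (Fin.ext h)
  · intro y hy
    simp only [coe_filter, mem_range] at hy
    exact ⟨e.symm ⟨y, hy.1⟩, by simpa using hy.2, by simp⟩

theorem finSigmaFinEquiv_mod_injective {n k : ℕ} {r : Fin n → ℕ} (hr : ∀ i, r i ≤ k)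
    (i : Fin n) : Function.Injective fun j : Fin (r i) => (finSigmaFinEquiv ⟨i, j⟩ : ℕ) % k := by
  intro j j' h
  simp only [finSigmaFinEquiv_apply] at h
  exact Fin.ext <| (Nat.ModEq.add_left_cancel' _ h).eq_of_lt_of_lt
    (j.2.trans_le (hr i)) (j'.2.trans_le (hr i))

/-- Any exponent vector `r` with all entries `< k` and degree divisible by `k` factors
as a sum of `k` squarefree exponent vectors, all of the same degree `(∑ i, r i) / k`. -/
theorem squarefree_equidegree_factorization {n k : ℕ} (hk : 1 ≤ k)
    (r : Fin n → ℕ) (hr : ∀ i, r i < k) (hdvd : k ∣ ∑ i, r i) :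
    ∃ M : Fin k → (Fin n → ℕ),
      (∀ t, ∀ i, M t i ≤ 1) ∧
      (∀ t, ∑ i, M t i = (∑ i, r i) / k) ∧
      (∑ t, M t) = r := by
  let c : (Σ i, Fin (r i)) → Fin k := fun x => ⟨finSigmaFinEquiv x % k, Nat.mod_lt _ hk⟩
  refine ⟨colorCount c, colorCount_le_one c fun i => ?_, fun t => ?_, funext fun i => ?_⟩
  · exact .of_comp (f := Fin.val) (finSigmaFinEquiv_mod_injective (fun i => (hr i).le) i)
  · rw [sum_colorCount_index, ← card_filter_range_mod_eq_of_dvd hdvd t.2,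
      ← card_filter_comp_equiv_fin finSigmaFinEquiv]
    simp [c, Fin.ext_iff]
  · simp [Finset.sum_apply, sum_colorCount_color]
end
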